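/- The intersection of the parabola 𝒫 and the circle 𝒞 consists of exactly two points, namely T₁ = (−2√3·s, 2s) and T₂ = (2√3·s, 2s). Equivalently, {(x,y) ∈ ℝ² : x² = 4sy + 4s² and x² + y² − y/cos(2π/9) = 0} = {(−2√3·s, 2s), (2√3·s, 2s)}. -/

import Mathlib

open Real

noncomputable section

abbrev Pt := EuclideanSpace ℝ (Fin 2)

def pt (x y : ℝ) : Pt := (WithLp.equiv 2 _).symm ![x, y]

/-- The constant s = sin(π/18)·cos(π/9). -/
def s : ℝ := Real.sin (π / 18) * Real.cos (π / 9)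

/-- The parabola x² = 4sy + 4s², with focus the origin and directrix y = −2s. -/
def parab : Set Pt := {p : Pt | (p 0) ^ 2 = 4 * s * (p 1) + 4 * s ^ 2}

/-- The circle through D₋₁, D₋₃ and the origin, via its equation. -/
def circC : Set Pt :=
  {p : Pt | (p 0) ^ 2 + (p 1) ^ 2 - (p 1) / Real.cos (2 * π / 9) = 0}

/-- The first tangency point T₁ = (−2√3·s, 2s). -/
def T₁ : Pt := pt (-(2 * Real.sqrt 3 * s)) (2 * s)

/-- The second tangency point T₂ = (2√3·s, 2s). -/
def T₂ : Pt := pt (2 * Real.sqrt 3 * s) (2 * s)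

/-!
The key identity is `8 s cos (2π/9) = 1`: since `sin (π/18) = cos (4π/9)`, it is the classical
`8 cos (π/9) cos (2π/9) cos (4π/9) = 1`, obtained by multiplying by `sin (π/9)` and applying the
double-angle formula three times. The circle is therefore `x² + y² = 8sy`, and subtracting the
parabola `x² = 4sy + 4s²` leaves `(y - 2s)² = 0`: the two curves meet only on the line `y = 2s`,
where `x² = 12s²`.
-/

theorem Real.sin_mul_eight_mul_cos_mul_cos_two_mul_mul_cos_four_mul (x : ℝ) :
    sin x * (8 * cos x * cos (2 * x) * cos (4 * x)) = sin (8 * x) := by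
  have h₂ : sin (2 * x) = 2 * sin x * cos x := sin_two_mul x
  have h₄ : sin (4 * x) = 2 * sin (2 * x) * cos (2 * x) := by
    rw [← sin_two_mul]; ring_nf
  have h₈ : sin (8 * x) = 2 * sin (4 * x) * cos (4 * x) := by
    rw [← sin_two_mul]; ring_nf
  rw [h₈, h₄, h₂]
  ring

theorem Real.eight_mul_cos_pi_div_nine_mul_cos_mul_cos :
    8 * cos (π / 9) * cos (2 * (π / 9)) * cos (4 * (π / 9)) = 1 := by
  have hsin : sin (π / 9) ≠ 0 :=
    (sin_pos_of_pos_of_lt_pi (by positivity) (by linarith [pi_pos])).ne'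
  apply mul_left_cancel₀ hsin
  rw [sin_mul_eight_mul_cos_mul_cos_two_mul_mul_cos_four_mul, mul_one,
    show 8 * (π / 9) = π - π / 9 by ring, sin_pi_sub]

theorem eight_mul_s_mul_cos_two_pi_div_nine : 8 * s * cos (2 * π / 9) = 1 := by
  have hsin : sin (π / 18) = cos (4 * (π / 9)) := by
    rw [← cos_pi_div_two_sub]; ring_nf
  rw [s, hsin, ← eight_mul_cos_pi_div_nine_mul_cos_mul_cos, mul_div_assoc]
  ring

theorem s_pos : 0 < s :=
  mul_pos (sin_pos_of_pos_of_lt_pi (by positivity) (by linarith [pi_pos]))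
    (cos_pos_of_mem_Ioo ⟨by linarith [pi_pos], by linarith [pi_pos]⟩)

theorem mem_circC_iff (p : Pt) : p ∈ circC ↔ p 0 ^ 2 + p 1 ^ 2 = 8 * s * p 1 := by
  have hcos : cos (2 * π / 9) ≠ 0 := by
    intro h
    simpa [h] using eight_mul_s_mul_cos_two_pi_div_nine
  rw [circC, Set.mem_ofPred_eq, sub_eq_zero, div_eq_mul_one_div,
    ← eight_mul_s_mul_cos_two_pi_div_nine, mul_div_cancel_right₀ _ hcos]
  ring_nf

theorem parabola_inter_circle_iff (s x y : ℝ) :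
    (x ^ 2 = 4 * s * y + 4 * s ^ 2 ∧ x ^ 2 + y ^ 2 = 8 * s * y) ↔
      (x = -(2 * √3 * s) ∨ x = 2 * √3 * s) ∧ y = 2 * s := by
  have h3 : √3 ^ 2 = 3 := sq_sqrt (by norm_num)
  constructor
  · rintro ⟨hpar, hcirc⟩
    have hy : y = 2 * s := by
      have : (y - 2 * s) ^ 2 = 0 := by linear_combination hcirc - hpar
      linarith [pow_eq_zero_iff (n := 2) two_ne_zero |>.mp this]
    have hx : x ^ 2 = (2 * √3 * s) ^ 2 := by
      linear_combination hpar + 4 * s * hy - 4 * s ^ 2 * h3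
    exact ⟨(sq_eq_sq_iff_eq_or_eq_neg.mp hx).symm, hy⟩
  · rintro ⟨hx | hx, rfl⟩ <;> subst hx <;>
      exact ⟨by linear_combination 4 * s ^ 2 * h3, by linear_combination 4 * s ^ 2 * h3⟩

@[simp] theorem pt_apply_zero (x y : ℝ) : pt x y 0 = x := rfl

@[simp] theorem pt_apply_one (x y : ℝ) : pt x y 1 = y := rfl

theorem eq_pt_iff (p : Pt) (x y : ℝ) : p = pt x y ↔ p 0 = x ∧ p 1 = y := by
  refine ⟨by rintro rfl; simp, fun ⟨h0, h1⟩ => ?_⟩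
  ext i
  fin_cases i <;> simpa

theorem parabola_circle_tangency :
    parab ∩ circC = {T₁, T₂} ∧ T₁ ≠ T₂ := by
  refine ⟨Set.ext fun p => ?_, fun h => ?_⟩
  · rw [Set.mem_inter_iff, mem_circC_iff, parab, Set.mem_ofPred_eq, parabola_inter_circle_iff,
      Set.mem_insert_iff, Set.mem_singleton_iff, T₁, T₂, eq_pt_iff, eq_pt_iff]
    tauto
  · have hx := congrArg (· 0) h
    simp only [T₁, T₂, pt_apply_zero] at hx
    have : 0 < √3 * s := mul_pos (by positivity) s_pos
    linarith
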